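/- arXiv:2102.00678 — 3 statements merged into one kernel-verified Lean document; each statement's English description precedes it below -/
import Mathlib

section
/- Let p_p, p_n be probability densities on X, π_D ∈ (0,1), and define the marginal density p(x) = π_D·p_p(x) + (1−π_D)·p_n(x) and the posterior η(x) = π_D·p_p(x)/p(x) wherever p(x) > 0. For j = 1,…,m let π_j ∈ [0,1], ρ_j > 0 with ∑_j ρ_j = 1, and define the mixture densities p_tr^j(x) = π_j·p_p(x) + (1−π_j)·p_n(x) and the surrogate posterior η̄_j(x) = ρ_j·p_tr^j(x) / ∑_{k=1}^m ρ_k·p_tr^k(x). Then for every x with p(x) > 0, η̄_j(x) = (a_j·η(x) + b_j)/(c·η(x) + d), where a_j = ρ_j(π_j − π_D), b_j = ρ_j·π_D(1−π_j), c = ∑_k ρ_k(π_k − π_D), and d = ∑_k ρ_k·π_D(1−π_k). -/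
theorem stmt_0 {X : Type*} (m : ℕ)
    (pp pn : X → ℝ) (hpp : ∀ x, 0 ≤ pp x) (hpn : ∀ x, 0 ≤ pn x)
    (πD : ℝ) (hπD : πD ∈ Set.Ioo (0:ℝ) 1)
    (π : Fin m → ℝ) (hπ : ∀ j, π j ∈ Set.Icc (0:ℝ) 1)
    (ρ : Fin m → ℝ) (hρ : ∀ j, 0 < ρ j) (hρ1 : ∑ j, ρ j = 1)
    (p : X → ℝ) (hp : ∀ x, p x = πD * pp x + (1 - πD) * pn x)
    (η : X → ℝ) (hη : ∀ x, p x > 0 → η x = πD * pp x / p x)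
    (ptr : Fin m → X → ℝ)
    (hptr : ∀ j x, ptr j x = π j * pp x + (1 - π j) * pn x)
    (ηb : Fin m → X → ℝ)
    (hηb : ∀ j x, ηb j x = ρ j * ptr j x / ∑ k, ρ k * ptr k x)
    (a b : Fin m → ℝ) (c d : ℝ)
    (ha : ∀ j, a j = ρ j * (π j - πD)) (hb : ∀ j, b j = ρ j * πD * (1 - π j))
    (hc : c = ∑ k, ρ k * (π k - πD)) (hd : d = ∑ k, ρ k * πD * (1 - π k)) :
    ∀ x, p x > 0 → (∑ k, ρ k * ptr k x) > 0 →
      ∀ j, ηb j x = (a j * η x + b j) / (c * η x + d) := by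
  intro x hx hS j
  have hne : p x ≠ 0 := ne_of_gt hx
  have hηp : η x * p x = πD * pp x := by rw [hη x hx]; field_simp
  have key : ∀ k, (a k * η x + b k) * p x = πD * (1 - πD) * (ρ k * ptr k x) := by
    intro k
    have h1 : (a k * η x + b k) * p x = a k * (η x * p x) + b k * p x := by ring
    rw [h1, hηp, ha, hb, hptr, hp]; ring
  have hsum : (c * η x + d) * p x = πD * (1 - πD) * ∑ k, ρ k * ptr k x := by
    have h2 : c * η x + d = ∑ k, (a k * η x + b k) := by
      rw [hc, hd, Finset.sum_add_distrib, Finset.sum_mul]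
      simp [ha, hb]
    rw [h2, Finset.sum_mul, Finset.sum_congr rfl fun k _ => key k, ← Finset.mul_sum]
  have hπpos : 0 < πD * (1 - πD) := mul_pos hπD.1 (by linarith [hπD.2])
  have hden : 0 < c * η x + d := by
    have h3 : 0 < πD * (1 - πD) * ∑ k, ρ k * ptr k x := mul_pos hπpos hS
    nlinarith
  rw [hηb, div_eq_div_iff hS.ne' hden.ne']
  exact mul_right_cancel₀ hne (by
    linear_combination ρ j * ptr j x * hsum - (∑ k, ρ k * ptr k x) * key j)
end

section
/- Let m ≥ 2, π_D ∈ (0,1), π_j ∈ [0,1], ρ_j > 0, ∑_j ρ_j = 1, and assume ∃ j ≠ j' with π_j ≠ π_{j'}. Define a_j = ρ_j(π_j − π_D), b_j = ρ_j·π_D(1−π_j), c = ∑_k ρ_k(π_k − π_D), d = ∑_k ρ_k·π_D(1−π_k), and T_j(t) = (a_j t + b_j)/(c t + d). Then the map T : [0,1] → ℝ^m, T(t) = (T_1(t),…,T_m(t)), is injective. -/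
theorem stmt_2 (m : ℕ) (hm : 2 ≤ m)
    (πD : ℝ) (hπD : πD ∈ Set.Ioo (0:ℝ) 1)
    (π : Fin m → ℝ) (hπ : ∀ j, π j ∈ Set.Icc (0:ℝ) 1)
    (ρ : Fin m → ℝ) (hρ : ∀ j, 0 < ρ j) (hρ1 : ∑ j, ρ j = 1)
    (hdiff : ∃ j j', j ≠ j' ∧ π j ≠ π j')
    (a b : Fin m → ℝ) (c d : ℝ)
    (ha : ∀ j, a j = ρ j * (π j - πD)) (hb : ∀ j, b j = ρ j * πD * (1 - π j))
    (hc : c = ∑ k, ρ k * (π k - πD)) (hd : d = ∑ k, ρ k * πD * (1 - π k))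
    (T : ℝ → Fin m → ℝ)
    (hT : ∀ t j, T t j = (a j * t + b j) / (c * t + d)) :
    Set.InjOn T (Set.Icc (0:ℝ) 1) := by
  obtain ⟨j0, j1, -, hπne⟩ := hdiff
  obtain ⟨jl, jh, hlt⟩ : ∃ jl jh, π jl < π jh := by
    rcases hπne.lt_or_gt with h | h
    · exact ⟨j0, j1, h⟩
    · exact ⟨j1, j0, h⟩
  have hπD0 := hπD.1
  have hπD1 := hπD.2
  have key : ∀ t ∈ Set.Icc (0:ℝ) 1, 0 < c * t + d := by
    intro t ht
    have hform : c * t + d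
        = ∑ k, (ρ k * (π k * t * (1 - πD)) + ρ k * (πD * (1 - π k) * (1 - t))) := by
      rw [hc, hd, Finset.sum_mul, ← Finset.sum_add_distrib]
      exact Finset.sum_congr rfl fun k _ => by ring
    rw [hform]
    have hnn : ∀ k ∈ Finset.univ, 0 ≤ ρ k * (π k * t * (1 - πD)) + ρ k * (πD * (1 - π k) * (1 - t)) := by
      intro k _
      have h1 := (hπ k).1; have h2 := (hπ k).2
      have h3 := ht.1; have h4 := ht.2
      have hA : 0 ≤ ρ k * (π k * t * (1 - πD)) :=
        mul_nonneg (hρ k).le (mul_nonneg (mul_nonneg h1 h3) (by linarith))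
      have hB : 0 ≤ ρ k * (πD * (1 - π k) * (1 - t)) :=
        mul_nonneg (hρ k).le (mul_nonneg (mul_nonneg hπD0.le (by linarith)) (by linarith))
      linarith
    rcases eq_or_lt_of_le ht.1 with h0 | h0
    · refine Finset.sum_pos' hnn ⟨jl, Finset.mem_univ jl, ?_⟩
      rw [← h0]
      have h2 := (hπ jh).2
      have hA : 0 < ρ jl * (πD * (1 - π jl) * (1 - 0)) :=
        mul_pos (hρ jl) (mul_pos (mul_pos hπD0 (by linarith)) (by norm_num))
      have h1 := (hπ jl).1
      have hB : 0 ≤ ρ jl * (π jl * 0 * (1 - πD)) := by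
        have h : ρ jl * (π jl * 0 * (1 - πD)) = 0 := by ring
        rw [h]
      linarith
    · refine Finset.sum_pos' hnn ⟨jh, Finset.mem_univ jh, ?_⟩
      have h1 := (hπ jl).1
      have h2 := (hπ jh).2
      have hph : 0 < π jh := lt_of_le_of_lt h1 hlt
      have hA : 0 < ρ jh * (π jh * t * (1 - πD)) :=
        mul_pos (hρ jh) (mul_pos (mul_pos hph h0) (by linarith))
      have hB : 0 ≤ ρ jh * (πD * (1 - π jh) * (1 - t)) :=
        mul_nonneg (hρ jh).le (mul_nonneg (mul_nonneg hπD0.le (by linarith)) (by linarith [ht.2]))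
      linarith
  intro t1 ht1 t2 ht2 hEq
  by_contra hne
  have h1 := key t1 ht1
  have h2 := key t2 ht2
  have hzero : ∀ j, a j * d - b j * c = 0 := by
    intro j
    have heq := congrFun hEq j
    rw [hT, hT] at heq
    have hcross : (a j * t1 + b j) * (c * t2 + d) = (a j * t2 + b j) * (c * t1 + d) :=
      (div_eq_div_iff h1.ne' h2.ne').mp heq
    have hsub : t1 - t2 ≠ 0 := sub_ne_zero.mpr hne
    have hmul : (t1 - t2) * (a j * d - b j * c) = 0 := by linear_combination hcross
    exact (mul_eq_zero.mp hmul).resolve_left hsub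
  have hkey : ∀ j, π j * (d + πD * c) - πD * (d + c) = 0 := by
    intro j
    have h := hzero j
    rw [ha j, hb j] at h
    have hX : ρ j * (π j * (d + πD * c) - πD * (d + c)) = 0 := by linear_combination h
    exact (mul_eq_zero.mp hX).resolve_left (hρ j).ne'
  have hd0 : d + πD * c = 0 := by
    by_contra hne'
    have hl := hkey jl
    have hh := hkey jh
    have : (π jl - π jh) * (d + πD * c) = 0 := by linear_combination hl - hh
    rcases mul_eq_zero.mp this with h | h
    · exact hlt.ne (by linarith)
    · exact hne' h
  have hcd : d + c = 0 := by
    have := hkey jl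
    rw [hd0] at this
    have : πD * (d + c) = 0 := by linarith
    rcases mul_eq_zero.mp this with h | h
    · exact absurd h hπD0.ne'
    · exact h
  have := key 1 (by norm_num)
  linarith
end

section
/- Let p_p, p_n be probability densities, π_1, π_2 ∈ [0,1] with π_1 > π_2, π_D ∈ [0,1], and p_tr^1 = π_1 p_p + (1−π_1)p_n, p_tr^2 = π_2 p_p + (1−π_2)p_n. Then for any bounded measurable loss values ℓ_+(x), ℓ_−(x): π_D·E_{p_p}[ℓ_+] + (1−π_D)·E_{p_n}[ℓ_−] = c_1^+·E_{p_tr^1}[ℓ_+] − c_2^+·E_{p_tr^2}[ℓ_+] − c_1^−·E_{p_tr^1}[ℓ_−] + c_2^−·E_{p_tr^2}[ℓ_−], where c_1^+ = (1−π_2)π_D/(π_1−π_2), c_1^− = π_2(1−π_D)/(π_1−π_2), c_2^+ = (1−π_1)π_D/(π_1−π_2), c_2^− = π_1(1−π_D)/(π_1−π_2). -/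
open MeasureTheory


private lemma mix_int {X : Type*} [MeasurableSpace X] (μ : Measure X)
    (l p q : X → ℝ) (a : ℝ)
    (hp : Integrable (fun x => l x * p x) μ)
    (hq : Integrable (fun x => l x * q x) μ) :
    (∫ x, l x * (a * p x + (1 - a) * q x) ∂μ)
      = a * ∫ x, l x * p x ∂μ + (1 - a) * ∫ x, l x * q x ∂μ := by
  rw [← MeasureTheory.integral_const_mul, ← MeasureTheory.integral_const_mul, ← integral_add (hp.const_mul a) (hq.const_mul (1 - a))]
  exact integral_congr_ae (Filter.Eventually.of_forall fun x => by ring)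

theorem stmt_15 {X : Type*} [MeasurableSpace X] (μ : Measure X)
    (pp pn : X → ℝ) (hpp : ∀ x, 0 ≤ pp x) (hpn : ∀ x, 0 ≤ pn x)
    (π1 π2 πD : ℝ) (hπ1 : π1 ∈ Set.Icc (0:ℝ) 1) (hπ2 : π2 ∈ Set.Icc (0:ℝ) 1)
    (hπD : πD ∈ Set.Icc (0:ℝ) 1) (h12 : π2 < π1)
    (ptr1 ptr2 : X → ℝ)
    (hptr1 : ∀ x, ptr1 x = π1 * pp x + (1 - π1) * pn x)
    (hptr2 : ∀ x, ptr2 x = π2 * pp x + (1 - π2) * pn x)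
    (ℓp ℓn : X → ℝ)
    (hip : Integrable (fun x => ℓp x * pp x) μ)
    (hin : Integrable (fun x => ℓp x * pn x) μ)
    (hjp : Integrable (fun x => ℓn x * pp x) μ)
    (hjn : Integrable (fun x => ℓn x * pn x) μ)
    (c1p c1n c2p c2n : ℝ)
    (hc1p : c1p = (1 - π2) * πD / (π1 - π2))
    (hc1n : c1n = π2 * (1 - πD) / (π1 - π2))
    (hc2p : c2p = (1 - π1) * πD / (π1 - π2))
    (hc2n : c2n = π1 * (1 - πD) / (π1 - π2)) :
    πD * ∫ x, ℓp x * pp x ∂μ + (1 - πD) * ∫ x, ℓn x * pn x ∂μ =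
      c1p * ∫ x, ℓp x * ptr1 x ∂μ - c2p * ∫ x, ℓp x * ptr2 x ∂μ
        - c1n * ∫ x, ℓn x * ptr1 x ∂μ + c2n * ∫ x, ℓn x * ptr2 x ∂μ := by
  have hd : π1 - π2 ≠ 0 := sub_ne_zero.mpr (ne_of_gt h12)
  have e1 : (∫ x, ℓp x * ptr1 x ∂μ)
      = π1 * ∫ x, ℓp x * pp x ∂μ + (1 - π1) * ∫ x, ℓp x * pn x ∂μ := by
    rw [show (fun x => ℓp x * ptr1 x) = fun x => ℓp x * (π1 * pp x + (1 - π1) * pn x) from funext fun x => by rw [hptr1 x]]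
    exact mix_int μ ℓp pp pn π1 hip hin
  have e2 : (∫ x, ℓp x * ptr2 x ∂μ)
      = π2 * ∫ x, ℓp x * pp x ∂μ + (1 - π2) * ∫ x, ℓp x * pn x ∂μ := by
    rw [show (fun x => ℓp x * ptr2 x) = fun x => ℓp x * (π2 * pp x + (1 - π2) * pn x) from funext fun x => by rw [hptr2 x]]
    exact mix_int μ ℓp pp pn π2 hip hin
  have e3 : (∫ x, ℓn x * ptr1 x ∂μ)
      = π1 * ∫ x, ℓn x * pp x ∂μ + (1 - π1) * ∫ x, ℓn x * pn x ∂μ := by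
    rw [show (fun x => ℓn x * ptr1 x) = fun x => ℓn x * (π1 * pp x + (1 - π1) * pn x) from funext fun x => by rw [hptr1 x]]
    exact mix_int μ ℓn pp pn π1 hjp hjn
  have e4 : (∫ x, ℓn x * ptr2 x ∂μ)
      = π2 * ∫ x, ℓn x * pp x ∂μ + (1 - π2) * ∫ x, ℓn x * pn x ∂μ := by
    rw [show (fun x => ℓn x * ptr2 x) = fun x => ℓn x * (π2 * pp x + (1 - π2) * pn x) from funext fun x => by rw [hptr2 x]]
    exact mix_int μ ℓn pp pn π2 hjp hjn
  rw [e1, e2, e3, e4, hc1p, hc1n, hc2p, hc2n]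
  field_simp
  ring
end
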